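/- arXiv:2103.15192 — 2 statements merged into one kernel-verified Lean document; each statement's English description precedes it below -/
import Mathlib

section
/- For every prime p and every integer j ≥ 0, the following congruence between integers holds: C(2jp, jp) · ( Σ_{k=0}^{jp} C(jp, k)^2 · C(jp + k, k) · C(2k, jp) ) ≡ C(2j, j) · ( Σ_{k=0}^{j} C(j, k)^2 · C(j + k, k) · C(2k, j) ) (mod p). -/
/-! By Lucas's theorem, `C(a p, k) ≡ 0 (mod p)` unless `p ∣ k`, and `C(a p, b p) ≡ C(a, b)`.
Hence in the sum over `k ≤ j p` only the terms `k = a p` survive, and in each of them, as in the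
outer factor, every binomial coefficient reduces to the one with `p` divided out. -/

open Finset

theorem Finset.sum_range_mul_add_one_of_not_dvd {M : Type*} [AddCommMonoid M] {p : ℕ}
    (hp : 0 < p) (n : ℕ) {f : ℕ → M} (hf : ∀ k, ¬ p ∣ k → f k = 0) :
    ∑ k ∈ range (n * p + 1), f k = ∑ a ∈ range (n + 1), f (a * p) := by
  have hinj : Set.InjOn (· * p) (range (n + 1)) := fun a _ b _ h =>
    Nat.eq_of_mul_eq_mul_right hp h
  rw [← sum_image hinj]
  refine (sum_subset ?_ fun k hk hk' => hf k ?_).symm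
  · intro k hk
    obtain ⟨a, ha, rfl⟩ := mem_image.mp hk
    rw [mem_range] at ha ⊢
    have := Nat.mul_le_mul_right p (Nat.lt_succ_iff.mp ha)
    omega
  · rintro ⟨a, rfl⟩
    refine hk' (mem_image.mpr ⟨a, ?_, mul_comm a p⟩)
    rw [mem_range] at hk ⊢
    have : a * p ≤ n * p := by rw [mul_comm a]; omega
    exact Nat.lt_succ_of_le (Nat.le_of_mul_le_mul_right this hp)

namespace Choose

variable {p : ℕ} [Fact p.Prime]

theorem cast_choose_mul_mul (a b : ℕ) :
    ((Nat.choose (a * p) (b * p) : ℕ) : ZMod p) = Nat.choose a b := by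
  rw [ZMod.natCast_eq_natCast_iff, mul_comm a, mul_comm b]
  exact choose_mul_mul_modEq_choose_nat

theorem cast_choose_mul_of_not_dvd (a : ℕ) {k : ℕ} (hk : ¬ p ∣ k) :
    ((Nat.choose (a * p) k : ℕ) : ZMod p) = 0 := by
  have hk' : 0 < k % p := Nat.pos_of_ne_zero fun h => hk (Nat.dvd_of_mod_eq_zero h)
  rw [(ZMod.natCast_eq_natCast_iff _ _ _).mpr choose_modEq_choose_mod_mul_choose_div_nat,
    Nat.mul_mod_left, Nat.choose_eq_zero_of_lt hk', zero_mul, Nat.cast_zero]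

end Choose

open Choose in
/-- For every prime `p` and every integer `j ≥ 0`,
`C(2jp, jp) * (∑_{k=0}^{jp} C(jp,k)^2 C(jp+k,k) C(2k,jp)) ≡
 C(2j, j) * (∑_{k=0}^{j} C(j,k)^2 C(j+k,k) C(2k,j)) (mod p)`. -/
theorem stmt7 (p : ℕ) (hp : p.Prime) (j : ℕ) :
    Nat.choose (2 * j * p) (j * p) *
        (∑ k ∈ Finset.range (j * p + 1),
          Nat.choose (j * p) k ^ 2 * Nat.choose (j * p + k) k * Nat.choose (2 * k) (j * p)) ≡
      Nat.choose (2 * j) j *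
        (∑ k ∈ Finset.range (j + 1),
          Nat.choose j k ^ 2 * Nat.choose (j + k) k * Nat.choose (2 * k) j)
      [MOD p] := by
  have : Fact p.Prime := ⟨hp⟩
  rw [← ZMod.natCast_eq_natCast_iff]
  push_cast
  rw [sum_range_mul_add_one_of_not_dvd hp.pos j fun k hk => by
    rw [cast_choose_mul_of_not_dvd j hk]; ring]
  -- `j * p + a * p` and `2 * (a * p)` are regrouped as `(j + a) * p` and `2 * a * p`
  simp only [← add_mul, ← mul_assoc, cast_choose_mul_mul]
end

section
/- For every prime p, the identity f_2|_p(z) = P_{2,p}(z) · ( f_1|_p(z) )^p holds in 𝔽_p[[z]]. -/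
/-!
Write `a n` for the coefficients of `f₂`, so that `(2n - 1) aₙ = -C(2n, n)²`. By Lucas' theorem
`C(2(pq + r), pq + r) ≡ C(2r, r) C(2q, q) (mod p)` for `r < p` (both sides vanish when
`2r ≥ p`). If `p ∤ C(2r, r)` then `2r - 1` is invertible mod `p` and `2n - 1 ≡ 2r - 1`, so
`a (pq + r) ≡ a r · C(2q, q)²`; otherwise both sides vanish because `C(2n, n) ∣ aₙ`. Since
`f ^ p = f(z ^ p)` over `𝔽_p`, this congruence is the coefficient of `z ^ (pq + r)` in
`P₂ · f₁ ^ p`.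
-/

open Nat PowerSeries

theorem Nat.centralBinom_succ_eq_two_mul_mul_catalan (n : ℕ) :
    centralBinom (n + 1) = 2 * (2 * n + 1) * catalan n :=
  Nat.eq_of_mul_eq_mul_left n.succ_pos <| by
    rw [succ_mul_centralBinom_succ, ← succ_mul_catalan_eq_centralBinom, succ_eq_add_one]; ring

theorem Nat.centralBinom_mul_add_cast_zmod {p : ℕ} [hp : Fact p.Prime] {r : ℕ} (hr : r < p)
    (q : ℕ) : (centralBinom (p * q + r) : ZMod p) = centralBinom r * centralBinom q := by
  have lucas := (ZMod.natCast_eq_natCast_iff _ _ _).mpr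
    (Choose.choose_modEq_choose_mod_mul_choose_div_nat (n := 2 * (p * q + r)) (k := p * q + r)
      (p := p))
  have hp0 := hp.out.pos
  have hmod : (p * q + r) % p = r := by rw [Nat.mul_add_mod, Nat.mod_eq_of_lt hr]
  have hdiv : (p * q + r) / p = q := by rw [Nat.mul_add_div hp0, Nat.div_eq_of_lt hr, add_zero]
  push_cast [hmod, hdiv] at lucas
  rw [centralBinom_eq_two_mul_choose, lucas]
  rcases lt_or_ge (2 * r) p with h2r | h2r
  · have h : 2 * (p * q + r) = p * (2 * q) + 2 * r := by ring
    rw [h, Nat.mul_add_mod, Nat.mod_eq_of_lt h2r, Nat.mul_add_div hp0, Nat.div_eq_of_lt h2r,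
      add_zero]
    rfl
  · have h : 2 * (p * q + r) = p * (2 * q + 1) + (2 * r - p) := by
      zify [h2r]; ring
    have hr' : (centralBinom r : ZMod p) = 0 :=
      (ZMod.natCast_eq_zero_iff _ _).mpr (hp.out.dvd_choose hr (by omega) h2r)
    rw [hr', h, Nat.mul_add_mod, Nat.mod_eq_of_lt (by omega),
      choose_eq_zero_of_lt (by omega : 2 * r - p < r)]
    simp

theorem PowerSeries.pow_char_eq_expand {p : ℕ} [hp : Fact p.Prime] (f : (ZMod p)⟦X⟧) :
    f ^ p = expand p hp.out.ne_zero f := by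
  rw [← MvPowerSeries.map_frobenius_expand p hp.out.ne_zero, ZMod.frobenius_zmod,
    MvPowerSeries.map_id]
  rfl

theorem PowerSeries.coeff_mul_expand_of_degree_lt {R : Type*} [CommRing R] {p : ℕ}
    (hp : p ≠ 0) {P : Polynomial R} (hP : P.degree < p) (g : R⟦X⟧) {r : ℕ} (hr : r < p)
    (q : ℕ) : coeff (p * q + r) ((P : R⟦X⟧) * expand p hp g) = P.coeff r * coeff q g := by
  rw [coeff_mul, Finset.sum_eq_single (r, p * q)]
  · rw [Polynomial.coeff_coe, coeff_expand_mul]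
  · rintro ⟨i, j⟩ hij hne
    rw [Finset.HasAntidiagonal.mem_antidiagonal] at hij
    rw [coeff_expand]
    split_ifs with hj
    · obtain ⟨k, rfl⟩ := hj
      rw [Polynomial.coeff_coe, Polynomial.coeff_eq_zero_of_degree_lt, zero_mul]
      by_contra! hle
      have hi : i < p := by exact_mod_cast hle.trans_lt hP
      have hmod := congrArg (· % p) hij
      have hdiv := congrArg (· / p) hij
      simp only [Nat.add_mul_mod_self_left, Nat.mul_add_mod, Nat.mod_eq_of_lt hi,
        Nat.mod_eq_of_lt hr] at hmod
      simp only [Nat.add_mul_div_left _ _ (pos_of_ne_zero hp), Nat.mul_add_div (pos_of_ne_zero hp),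
        Nat.div_eq_of_lt hi, Nat.div_eq_of_lt hr, zero_add, add_zero] at hdiv
      exact hne (by rw [hmod, hdiv])
    · rw [mul_zero]
  · simp [add_comm]

section CentralBinomRecurrence

variable {a : ℕ → ℤ} (ha : ∀ n : ℕ, (2 * n - 1 : ℤ) * a n = -(centralBinom n : ℤ) ^ 2)
include ha

theorem centralBinom_dvd_of_two_mul_sub_one_mul_eq (n : ℕ) : (centralBinom n : ℤ) ∣ a n := by
  cases n with
  | zero => simp
  | succ k =>
    refine ⟨-2 * catalan k, mul_left_cancel₀ (by omega : (2 * k + 1 : ℤ) ≠ 0) ?_⟩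
    have h := ha (k + 1)
    rw [centralBinom_succ_eq_two_mul_mul_catalan] at h ⊢
    push_cast at h ⊢
    linear_combination h

theorem intCast_mul_add_of_two_mul_sub_one_mul_eq {p : ℕ} [Fact p.Prime] {r : ℕ} (hr : r < p)
    (q : ℕ) : (a (p * q + r) : ZMod p) = a r * (centralBinom q : ZMod p) ^ 2 := by
  have hC := centralBinom_mul_add_cast_zmod hr q
  have hcast : ∀ n : ℕ, ((2 * n - 1 : ℤ) : ZMod p) * a n = -(centralBinom n : ZMod p) ^ 2 :=
    fun n => by exact_mod_cast congrArg (Int.cast : ℤ → ZMod p) (ha n)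
  by_cases hr0 : (centralBinom r : ZMod p) = 0
  · have hzero : ∀ n, (centralBinom n : ZMod p) = 0 → (a n : ZMod p) = 0 := fun n hn => by
      obtain ⟨b, hb⟩ := centralBinom_dvd_of_two_mul_sub_one_mul_eq ha n
      rw [hb]; push_cast; rw [hn, zero_mul]
    rw [hzero r hr0, hzero _ (by rw [hC, hr0, zero_mul]), zero_mul]
  · have hunit : ((2 * r - 1 : ℤ) : ZMod p) ≠ 0 := by
      intro h
      apply hr0
      simpa [h] using (hcast r).symm
    have hmod : ((2 * (p * q + r : ℕ) - 1 : ℤ) : ZMod p) = ((2 * r - 1 : ℤ) : ZMod p) := by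
      push_cast; simp
    have hn := hcast (p * q + r)
    rw [hmod, hC] at hn
    apply mul_left_cancel₀ hunit
    linear_combination hn - (centralBinom q : ZMod p) ^ 2 * hcast r

end CentralBinomRecurrence

theorem two_mul_sub_one_mul_eq_neg_centralBinom_sq {a : ℕ → ℤ}
    (ha : ∀ n : ℕ, (a n : ℚ) = (-1 / (2 * n - 1)) * (Nat.choose (2 * n) n : ℚ) ^ 2)
    (n : ℕ) : (2 * n - 1 : ℤ) * a n = -(centralBinom n : ℤ) ^ 2 := by
  have hne : (2 * n - 1 : ℚ) ≠ 0 := by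
    exact_mod_cast (by omega : (2 * n - 1 : ℤ) ≠ 0)
  have h : (2 * n - 1 : ℚ) * a n = -(centralBinom n : ℚ) ^ 2 := by
    rw [ha, centralBinom_eq_two_mul_choose]
    field_simp
  exact_mod_cast h

/-- For every prime `p`, `f₂|_p(z) = P_{2,p}(z) (f₁|_p(z))^p` in `𝔽_p[[z]]`, where
`f₁ = ∑ C(2n,n)² zⁿ`, `f₂ = ∑ (−1/(2n−1)) C(2n,n)² zⁿ` (an integer sequence `a`), and
`P_{i,p}` are the truncations of `f_i|_p` in degrees `< p`. -/
theorem stmt10 (p : ℕ) (hp : p.Prime)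
    (a : ℕ → ℤ)
    (ha : ∀ n : ℕ, (a n : ℚ) =
      ((-1 : ℚ) / (2 * (n : ℚ) - 1)) * (Nat.choose (2 * n) n : ℚ) ^ 2)
    (f₁p f₂p : PowerSeries (ZMod p)) (P₂p : Polynomial (ZMod p))
    (hf₁p : f₁p = PowerSeries.mk fun n => ((Nat.choose (2 * n) n : ZMod p)) ^ 2)
    (hf₂p : f₂p = PowerSeries.mk fun n => ((a n : ZMod p)))
    (hP₂p : P₂p = ∑ n ∈ Finset.range p, Polynomial.C ((a n : ZMod p)) * Polynomial.X ^ n) :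
    f₂p = (P₂p : PowerSeries (ZMod p)) * f₁p ^ p := by
  have : Fact p.Prime := ⟨hp⟩
  have hP : P₂p = trunc p f₂p := by
    ext n
    simp [hP₂p, hf₂p, coeff_trunc, Polynomial.coeff_X_pow]
  have hr : ∀ m, m % p < p := fun m => Nat.mod_lt _ hp.pos
  rw [pow_char_eq_expand]
  ext m
  rw [← Nat.div_add_mod m p, coeff_mul_expand_of_degree_lt _ (hP ▸ degree_trunc_lt _ _) _ (hr m),
    hP, coeff_trunc, if_pos (hr m), hf₁p, hf₂p, coeff_mk, coeff_mk, coeff_mk]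
  exact intCast_mul_add_of_two_mul_sub_one_mul_eq
    (two_mul_sub_one_mul_eq_neg_centralBinom_sq ha) (hr m) _
end
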